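/- Let κ be an inaccessible cardinal and let D be a κ-complete uniform ultrafilter on κ. Suppose there is a family ⟨X_δ : δ < κ⁺⟩ of members of D such that for every B ∈ D there exists δ < κ⁺ with |X_δ ∖ B| < κ. Then the minimum cardinality of a filter base for D is exactly κ⁺: D has a filter base of cardinality κ⁺, and no filter base for D has cardinality at most κ. -/

import Mathlib

/-!
The family `X δ \ S`, with `δ < κ⁺` and `|S| < κ`, is a filter base for `D`: it lies in `D`
because small sets are not in the uniform ultrafilter `D`, and it refines every `B ∈ D` by the
capture hypothesis. Since `κ` is inaccessible there are only `κ` sets of size `< κ`, so this base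
has cardinality at most `κ⁺ · κ = κ⁺`.

Conversely, given a family `𝔅` of at most `κ` sets of size `κ`, a transfinite recursion along
a well-order of `𝔅 ⊕ 𝔅` of length `≤ κ` picks distinct points `x_Y, y_Y ∈ Y` for all `Y ∈ 𝔅`.
The set `E = {x_Y}` and its complement then both meet every member of `𝔅`, so `𝔅` cannot be a
base of an ultrafilter, which contains `E` or its complement.
-/

open Cardinal Set Function

theorem exists_injective_forall_mem {ι α : Type u} (hι : #ι ≤ #α) (s : ι → Set α)
    (hs : ∀ i, #(s i) = #α) : ∃ f : ι → α, Injective f ∧ ∀ i, f i ∈ s i := by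
  -- a well-order of initial-ordinal type, so that every proper initial segment has size `< #ι`
  obtain ⟨r, _, hr⟩ := exists_ord_eq ι
  have hfresh : ∀ i (g : ∀ j, r j i → α), ∃ a ∈ s i, ∀ j (h : r j i), g j h ≠ a := by
    intro i g
    have hsmall : #(range fun j : {j // r j i} => g j j.2) < #(s i) := by
      rw [hs i]
      have hseg : #{j // r j i} < #ι := Ordinal.card_typein (r := r) i ▸ card_typein_lt i hr
      exact mk_range_le.trans_lt (hseg.trans_le hι)
    obtain ⟨a, ha, hna⟩ := sdiff_nonempty.2 fun h => (mk_le_mk_of_subset h).not_gt hsmall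
    exact ⟨a, ha, fun j h e => hna ⟨⟨j, h⟩, e⟩⟩
  choose pick hpick_mem hpick_fresh using hfresh
  have wf : WellFounded r := IsWellFounded.wf
  set f : ι → α := wf.fix pick
  have hf : ∀ i, f i = pick i fun j _ => f j := wf.fix_eq pick
  have hf_fresh : ∀ i j, r j i → f j ≠ f i := fun i j h => by
    rw [hf i]
    exact hpick_fresh i (fun j _ => f j) j h
  refine ⟨f, fun i j hij => ?_, fun i => (hf i).symm ▸ hpick_mem i _⟩
  rcases trichotomous_of r i j with h | h | h
  · exact absurd hij (hf_fresh j i h)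
  · exact h
  · exact absurd hij.symm (hf_fresh i j h)

theorem Ultrafilter.exists_mem_subset_or_subset_compl {α : Type*} (D : Ultrafilter α)
    {𝔅 : Set (Set α)} (hbase : ∀ B ∈ D, ∃ Y ∈ 𝔅, Y ⊆ B) (E : Set α) :
    ∃ Y ∈ 𝔅, Y ⊆ E ∨ Y ⊆ Eᶜ := by
  rcases D.mem_or_compl_mem E with hE | hE
  · obtain ⟨Y, hY, hYE⟩ := hbase E hE
    exact ⟨Y, hY, .inl hYE⟩
  · obtain ⟨Y, hY, hYE⟩ := hbase Eᶜ hE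
    exact ⟨Y, hY, .inr hYE⟩

theorem Ultrafilter.lt_mk_base_of_uniform {α : Type*} (hα : ℵ₀ ≤ #α) (D : Ultrafilter α)
    (huniform : ∀ A ∈ D, #A = #α) {𝔅 : Set (Set α)} (hmem : ∀ Y ∈ 𝔅, Y ∈ D)
    (hbase : ∀ B ∈ D, ∃ Y ∈ 𝔅, Y ⊆ B) : #α < #𝔅 := by
  by_contra! h𝔅
  have hsize : #(𝔅 ⊕ 𝔅) ≤ #α := by
    rw [mk_sum, lift_id]
    exact add_le_of_le hα h𝔅 h𝔅
  obtain ⟨f, hf_inj, hf_mem⟩ := exists_injective_forall_mem hsize (Sum.elim Subtype.val Subtype.val)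
    fun p => huniform _ (hmem _ (by rcases p with Y | Y <;> exact Y.2))
  obtain ⟨Y, hY, hYE | hYE⟩ :=
    D.exists_mem_subset_or_subset_compl hbase (range fun Y => f (.inl Y))
  · obtain ⟨Y', hY'⟩ := hYE (hf_mem (.inr ⟨Y, hY⟩))
    exact Sum.inl_ne_inr (hf_inj hY')
  · exact hYE (hf_mem (.inl ⟨Y, hY⟩)) ⟨_, rfl⟩

theorem Ultrafilter.sdiff_mem_of_mk_lt {α : Type*} {D : Ultrafilter α}
    (huniform : ∀ A ∈ D, #A = #α) {A S : Set α} (hA : A ∈ D) (hS : #S < #α) : A \ S ∈ D :=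
  Filter.sdiff_mem hA (D.compl_mem_iff_notMem.2 fun h => hS.ne (huniform S h))

theorem Cardinal.IsInaccessible.mk_subtype_mk_lt {α : Type*} (h : (#α).IsInaccessible) :
    #{S : Set α // #S < #α} = #α := by
  simpa only [h.isRegular.cof_ord] using mk_subset_mk_lt_cof h.isStrongPrelimit

theorem ultrafilter_base_number_eq_succ_general {α : Type u} {ι : Type u}
    (hinacc : (#α).IsInaccessible)
    (D : Ultrafilter α)
    (huniform : ∀ A ∈ D, #A = #α)
    (X : ι → Set α) (hι : #ι = Order.succ (#α))
    (hX : ∀ δ, X δ ∈ D)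
    (hcapture : ∀ B ∈ D, ∃ δ, #↥(X δ \ B) < #α) :
    (∃ 𝔅 : Set (Set α), (∀ Y ∈ 𝔅, Y ∈ D) ∧ (∀ B ∈ D, ∃ Y ∈ 𝔅, Y ⊆ B) ∧
        #𝔅 = Order.succ (#α)) ∧
      ∀ 𝔅 : Set (Set α), (∀ Y ∈ 𝔅, Y ∈ D) → (∀ B ∈ D, ∃ Y ∈ 𝔅, Y ⊆ B) →
        ¬ #𝔅 ≤ #α := by
  have hα : ℵ₀ ≤ #α := hinacc.aleph0_lt.le
  set 𝔅 := range fun p : ι × {S : Set α // #S < #α} => X p.1 \ p.2.1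
  have hmem : ∀ Y ∈ 𝔅, Y ∈ D := by
    rintro _ ⟨⟨δ, S, hS⟩, rfl⟩
    exact D.sdiff_mem_of_mk_lt huniform (hX δ) hS
  have hbase : ∀ B ∈ D, ∃ Y ∈ 𝔅, Y ⊆ B := by
    intro B hB
    obtain ⟨δ, hδ⟩ := hcapture B hB
    refine ⟨_, ⟨(δ, ⟨_, hδ⟩), rfl⟩, ?_⟩
    simp only [sdiff_sdiff_right_self, inter_subset_right]
  have hcard : #𝔅 ≤ Order.succ #α := calc
    #𝔅 ≤ #ι * #{S : Set α // #S < #α} :=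
      mk_range_le.trans_eq (by rw [mk_prod, lift_id, lift_id])
    _ = Order.succ #α := by
      rw [hι, hinacc.mk_subtype_mk_lt]
      exact mul_eq_left (hα.trans (Order.le_succ _)) (Order.le_succ _) hinacc.ne_zero
  exact ⟨⟨𝔅, hmem, hbase, hcard.antisymm
      (Order.succ_le_of_lt (D.lt_mk_base_of_uniform hα huniform hmem hbase))⟩,
    fun _ hmem' hbase' => (D.lt_mk_base_of_uniform hα huniform hmem' hbase').not_ge⟩

/-- Let `κ` (here the cardinality of the type `α`) be an
inaccessible cardinal and let `D` be a `κ`-complete uniform ultrafilter on `κ`.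
Suppose there is a family `⟨X δ : δ < κ⁺⟩` of members of `D` (indexed by a type
`ι` of cardinality `κ⁺`) such that for every `B ∈ D` there exists `δ` with
`|X δ \ B| < κ`.  Then the minimum cardinality of a filter base for `D` is
exactly `κ⁺`: `D` has a filter base of cardinality `κ⁺`, and no filter base
for `D` has cardinality at most `κ`. -/
theorem ultrafilter_base_number_eq_succ {α : Type u} {ι : Type u}
    (hinacc : (#α).IsInaccessible)
    (D : Ultrafilter α)
    (hcomplete : ∀ S : Set (Set α), #S < #α → (∀ A ∈ S, A ∈ D) → ⋂₀ S ∈ D)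
    (huniform : ∀ A ∈ D, #A = #α)
    (X : ι → Set α) (hι : #ι = Order.succ (#α))
    (hX : ∀ δ, X δ ∈ D)
    (hcapture : ∀ B ∈ D, ∃ δ, #↥(X δ \ B) < #α) :
    (∃ 𝔅 : Set (Set α), (∀ Y ∈ 𝔅, Y ∈ D) ∧ (∀ B ∈ D, ∃ Y ∈ 𝔅, Y ⊆ B) ∧
        #𝔅 = Order.succ (#α)) ∧
      ∀ 𝔅 : Set (Set α), (∀ Y ∈ 𝔅, Y ∈ D) → (∀ B ∈ D, ∃ Y ∈ 𝔅, Y ⊆ B) →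
        ¬ #𝔅 ≤ #α :=
  ultrafilter_base_number_eq_succ_general hinacc D huniform X hι hX hcapture
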